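/- arXiv:2304.04868 — 7 statements merged into one kernel-verified Lean document; each statement's English description precedes it below -/
import Mathlib

section
/- Let A* be a real random variable with finite positive variance, let ε_A be independent of A* with mean 0 and variance σγ² > 0, and let ε_M be independent of (A*, ε_A) with mean 0 and variance σα² > 0. Define A = γ₀ + γ₁A* + ε_A and M = α₀ + α₁A + ε_M with α₁ ≠ 0. Then, with ρ_{AA*}² = Cov(A, A*)²/(Var(A)Var(A*)) and ρ_{AM}² = Cov(A, M)²/(Var(A)Var(M)), the MP reliability index satisfies σγ²/(σγ² + σα²/α₁²) = (1 − ρ_{AA*}²)/(1/ρ_{AM}² − ρ_{AA*}²). -/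
open MeasureTheory

/-- Covariance of two real random variables. -/
noncomputable def cov {Ω : Type*} [MeasurableSpace Ω] (P : Measure Ω) (X Y : Ω → ℝ) : ℝ :=
  ∫ ω, (X ω - ∫ ω', X ω' ∂P) * (Y ω - ∫ ω', Y ω' ∂P) ∂P

/-- Variance of a real random variable. -/
noncomputable def var {Ω : Type*} [MeasurableSpace Ω] (P : Measure Ω) (X : Ω → ℝ) : ℝ :=
  cov P X X


/-!
Independence makes each error uncorrelated with its regressor, so
`Cov(A, A*) = γ₁ Var A*`, `Var A = γ₁² Var A* + σγ²`, `Cov(A, M) = α₁ Var A` and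
`Var M = α₁² Var A + σα²`. Hence `1 − ρ_{AA*}² = σγ² / Var A` and
`1/ρ_{AM}² − ρ_{AA*}² = (σγ² + σα²/α₁²) / Var A`, and the common factor `Var A` cancels.
-/

open ProbabilityTheory

section Covariance

variable {Ω : Type*} [MeasurableSpace Ω] {P : Measure Ω}

theorem cov_eq_covariance (X Y : Ω → ℝ) : cov P X Y = covariance X Y P := rfl

theorem cov_comm (X Y : Ω → ℝ) : cov P X Y = cov P Y X := covariance_comm X Y

theorem var_nonneg (X : Ω → ℝ) : 0 ≤ var P X :=
  integral_nonneg fun _ => mul_self_nonneg _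

variable [IsProbabilityMeasure P] {X E Z : Ω → ℝ}

theorem cov_const_add_mul_add_left (hX : MemLp X 2 P) (hE : MemLp E 2 P) (hZ : MemLp Z 2 P)
    (c a : ℝ) : cov P (fun ω => c + a * X ω + E ω) Z = a * cov P X Z + cov P E Z := by
  have hsum : (fun ω => c + a * X ω + E ω) = fun ω => c + (a • X + E) ω := by
    ext ω
    simp [add_assoc]
  have hint : Integrable (a • X + E) P := ((hX.const_smul a).add hE).integrable one_le_two
  rw [cov_eq_covariance, hsum, covariance_const_add_left hint,
    covariance_add_left (hX.const_smul a) hE hZ, covariance_smul_left]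
  rfl

theorem ProbabilityTheory.IndepFun.cov_const_add_mul_add_self (hind : IndepFun E X P) (hX : MemLp X 2 P)
    (hE : MemLp E 2 P) (c a : ℝ) : cov P (fun ω => c + a * X ω + E ω) X = a * var P X := by
  rw [cov_const_add_mul_add_left hX hE hX, cov_eq_covariance E, hind.covariance_eq_zero hE hX,
    add_zero, var]

theorem ProbabilityTheory.IndepFun.var_const_add_mul_add (hind : IndepFun E X P) (hX : MemLp X 2 P)
    (hE : MemLp E 2 P) (c a : ℝ) :
    var P (fun ω => c + a * X ω + E ω) = a ^ 2 * var P X + var P E := by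
  have hY : MemLp (fun ω => c + a * X ω + E ω) 2 P :=
    ((memLp_const c).add (hX.const_mul a)).add hE
  have hcovE : cov P E (fun ω => c + a * X ω + E ω) = var P E := by
    rw [cov_comm, cov_const_add_mul_add_left hX hE hE, cov_comm X, cov_eq_covariance E,
      hind.covariance_eq_zero hE hX, mul_zero, zero_add, var]
  rw [var, cov_const_add_mul_add_left hX hE hY, cov_comm X,
    hind.cov_const_add_mul_add_self hX hE, hcovE]
  ring

end Covariance

theorem reliability_ratio_eq {v s t a c w : ℝ} (ha : a ≠ 0) (hw : w = c ^ 2 * v + s)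
    (hw0 : w ≠ 0) :
    s / (s + t / a ^ 2) =
      (1 - (c * v) ^ 2 / (w * v)) /
        (1 / ((a * w) ^ 2 / (w * (a ^ 2 * w + t))) - (c * v) ^ 2 / (w * v)) := by
  have hρAA : (c * v) ^ 2 / (w * v) = c ^ 2 * v / w := by
    rcases eq_or_ne v 0 with rfl | hv
    · simp
    · field_simp
  have hρAM : 1 / ((a * w) ^ 2 / (w * (a ^ 2 * w + t))) = (a ^ 2 * w + t) / (a ^ 2 * w) := by
    rw [one_div_div]
    field_simp
  have hnum : 1 - c ^ 2 * v / w = s / w := by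
    field_simp
    linarith
  have hden : (a ^ 2 * w + t) / (a ^ 2 * w) - c ^ 2 * v / w = (s + t / a ^ 2) / w := by
    field_simp
    rw [hw]
    ring
  rw [hρAA, hρAM, hnum, hden, div_div_div_cancel_right₀ hw0]

theorem stmt_5_general
    {Ω : Type*} [MeasurableSpace Ω] (P : Measure Ω) [IsProbabilityMeasure P]
    (Astar εA εM : Ω → ℝ)
    (hAstar : MemLp Astar 2 P) (hεA : MemLp εA 2 P) (hεM : MemLp εM 2 P)
    (γ₀ γ₁ α₀ α₁ σγ2 σα2 : ℝ) (hα₁ : α₁ ≠ 0) (hσγ : 0 < σγ2)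
    (hvarA : var P εA = σγ2) (hvarM : var P εM = σα2)
    (hindA : ProbabilityTheory.IndepFun εA Astar P)
    (hindM : ProbabilityTheory.IndepFun εM (fun ω => (Astar ω, εA ω)) P)
    (A M : Ω → ℝ)
    (hA : A = fun ω => γ₀ + γ₁ * Astar ω + εA ω)
    (hM : M = fun ω => α₀ + α₁ * A ω + εM ω)
    (ρAA2 ρAM2 : ℝ)
    (hρAA2 : ρAA2 = cov P A Astar ^ 2 / (var P A * var P Astar))
    (hρAM2 : ρAM2 = cov P A M ^ 2 / (var P A * var P M)) :
    σγ2 / (σγ2 + σα2 / α₁ ^ 2) = (1 - ρAA2) / (1 / ρAM2 - ρAA2) := by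
  have hA2 : MemLp A 2 P := hA ▸ ((memLp_const γ₀).add (hAstar.const_mul γ₁)).add hεA
  have hindMA : IndepFun εM A P := hA ▸ hindM.comp measurable_id
    ((measurable_const.add (measurable_fst.const_mul γ₁)).add measurable_snd)
  have hcovA : cov P A Astar = γ₁ * var P Astar :=
    hA ▸ hindA.cov_const_add_mul_add_self hAstar hεA γ₀ γ₁
  have hvarA' : var P A = γ₁ ^ 2 * var P Astar + σγ2 :=
    hvarA ▸ hA ▸ hindA.var_const_add_mul_add hAstar hεA γ₀ γ₁
  have hcovM : cov P M A = α₁ * var P A := hM ▸ hindMA.cov_const_add_mul_add_self hA2 hεM α₀ α₁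
  have hvarM' : var P M = α₁ ^ 2 * var P A + σα2 :=
    hvarM ▸ hM ▸ hindMA.var_const_add_mul_add hA2 hεM α₀ α₁
  have hvarA_pos : 0 < var P A := by
    have := var_nonneg (P := P) Astar
    rw [hvarA']
    positivity
  rw [hρAA2, hρAM2, hcovA, cov_comm, hcovM, hvarM']
  exact reliability_ratio_eq hα₁ hvarA' hvarA_pos.ne'

/-- With `A = γ₀ + γ₁ A* + ε_A` and `M = α₀ + α₁ A + ε_M`, where
`ε_A ⟂ A*`, `ε_M ⟂ (A*, ε_A)`, the errors have mean zero and variances `σγ², σα² > 0`,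
the MP reliability index satisfies
`σγ²/(σγ² + σα²/α₁²) = (1 − ρ_{AA*}²)/(1/ρ_{AM}² − ρ_{AA*}²)`. -/
theorem stmt_5
    {Ω : Type*} [MeasurableSpace Ω] (P : Measure Ω) [IsProbabilityMeasure P]
    (Astar εA εM : Ω → ℝ)
    (hAstar : MemLp Astar 2 P) (hεA : MemLp εA 2 P) (hεM : MemLp εM 2 P)
    (hVarAstar : 0 < var P Astar)
    (γ₀ γ₁ α₀ α₁ σγ2 σα2 : ℝ) (hα₁ : α₁ ≠ 0) (hσγ : 0 < σγ2) (hσα : 0 < σα2)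
    (hmeanA : ∫ ω, εA ω ∂P = 0) (hmeanM : ∫ ω, εM ω ∂P = 0)
    (hvarA : var P εA = σγ2) (hvarM : var P εM = σα2)
    (hindA : ProbabilityTheory.IndepFun εA Astar P)
    (hindM : ProbabilityTheory.IndepFun εM (fun ω => (Astar ω, εA ω)) P)
    (A M : Ω → ℝ)
    (hA : A = fun ω => γ₀ + γ₁ * Astar ω + εA ω)
    (hM : M = fun ω => α₀ + α₁ * A ω + εM ω)
    (ρAA2 ρAM2 : ℝ)
    (hρAA2 : ρAA2 = cov P A Astar ^ 2 / (var P A * var P Astar))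
    (hρAM2 : ρAM2 = cov P A M ^ 2 / (var P A * var P M)) :
    σγ2 / (σγ2 + σα2 / α₁ ^ 2) = (1 - ρAA2) / (1 / ρAM2 - ρAA2) :=
  stmt_5_general P Astar εA εM hAstar hεA hεM γ₀ γ₁ α₀ α₁ σγ2 σα2 hα₁ hσγ hvarA hvarM hindA hindM A
    M hA hM ρAA2 ρAM2 hρAA2 hρAM2
end

section
/- Let m and x be real numbers with 0 < m ≤ 1, 0 ≤ x ≤ 1, and m·x < 1. Then 0 ≤ (1 − x)/(1/m − x) ≤ m. In particular, interpreting x = ρ_{AA*}² and m = ρ_{AM}², the MP reliability index ρ = (1 − ρ_{AA*}²)/(1/ρ_{AM}² − ρ_{AA*}²) is bounded within [0, ρ_{AM}²] regardless of the value of ρ_{AA*}. -/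
/-- For `0 < m ≤ 1`, `0 ≤ x ≤ 1` with `m x < 1`, one has
`0 ≤ (1 − x)/(1/m − x) ≤ m`. Interpreting `x = ρ_{AA*}²` and `m = ρ_{AM}²`,
the MP reliability index `ρ = (1 − ρ_{AA*}²)/(1/ρ_{AM}² − ρ_{AA*}²)` is bounded
within `[0, ρ_{AM}²]` regardless of the value of `ρ_{AA*}`. -/
theorem stmt_6 (m x : ℝ) (hm0 : 0 < m) (hm1 : m ≤ 1)
    (hx0 : 0 ≤ x) (hx1 : x ≤ 1) (hmx : m * x < 1) :
    0 ≤ (1 - x) / (1 / m - x) ∧ (1 - x) / (1 / m - x) ≤ m := by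
  have hden : 0 < 1 / m - x := by
    rw [sub_pos, lt_div_iff₀ hm0]
    linarith [mul_comm m x]
  constructor
  · exact div_nonneg (by linarith) hden.le
  · rw [div_le_iff₀ hden]
    have : m * x ≤ x := by nlinarith
    have hmm : m * (1 / m) = 1 := mul_one_div_cancel hm0.ne'
    nlinarith
end

section
/- Let (Ω, F, P) be a probability space, A* : Ω → ℝ and W : Ω → ℝ^d square-integrable random variables, and ε_A, ε_M real random variables with ε_A ~ N(0, σγ²) and ε_M ~ N(0, σα²), σγ², σα² > 0, ε_A and ε_M independent of each other and the pair (ε_A, ε_M) independent of (A*, W). Define A = γ₀ + γ₁A* + γ₂ᵀW + ε_A, M = α₀ + α₁A + α₂ᵀW + ε_M, and D = α₁²σγ² + σα². Then the conditional variance of A given (A*, M, W) is constant: almost surely, E[(A − E[A | σ(A*, M, W)])² | σ(A*, M, W)] = σα²σγ²/D. -/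
/-!
Write `S = α₁ εA + εM` for the noise of `M` given `(A*, W)`, and let `k S` be the regression of
`εA` on `S`, with `k = α₁ σγ² / D`. The residual `R = εA - k S` is uncorrelated with `S`, hence
independent of it because `(εA, εM)` is Gaussian, and `(R, S)` is independent of `(A*, W)`; so `R`
is independent of `σ(A*, M, W) ≤ σ(S, A*, W)`. On the other hand `A - R` is a function of
`(A*, M, W)`. Hence, given `(A*, M, W)`, the exposure `A` is a known quantity plus independent
noise `R`, and its conditional variance is the constant `Var R = σα² σγ² / D`.
-/

open MeasureTheory ProbabilityTheory

namespace ProbabilityTheory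

variable {Ω : Type*} {m m0 : MeasurableSpace Ω} {P : Measure Ω}

theorem condVar_add_of_indep [IsProbabilityMeasure P] {B R : Ω → ℝ} (hm : m ≤ m0)
    (hB : StronglyMeasurable[m] B) (hBint : Integrable B P) (hR : Measurable R)
    (hR2 : MemLp R 2 P) (hind : Indep (MeasurableSpace.comap R inferInstance) m P) :
    Var[B + R; P | m] =ᵐ[P] fun _ => Var[R; P] := by
  have hRint : Integrable R P := hR2.integrable one_le_two
  have hcondR : P[R | m] =ᵐ[P] fun _ => P[R] :=
    condExp_indep_eq hR.comap_le hm (Measurable.of_comap_le le_rfl).stronglyMeasurable hind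
  have hcond : P[B + R | m] =ᵐ[P] B + fun _ => P[R] := by
    filter_upwards [condExp_add hBint hRint m, hcondR] with ω h1 h2
    rw [h1, Pi.add_apply, condExp_of_stronglyMeasurable hm hB hBint, h2]
    rfl
  have hres : (B + R - P[B + R | m]) ^ 2 =ᵐ[P] fun ω => (R ω - P[R]) ^ 2 := by
    filter_upwards [hcond] with ω h
    simp only [Pi.pow_apply, Pi.sub_apply, Pi.add_apply, h]
    ring
  calc Var[B + R; P | m]
      =ᵐ[P] P[fun ω => (R ω - P[R]) ^ 2 | m] := condExp_congr_ae hres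
    _ =ᵐ[P] fun _ => P[fun ω => (R ω - P[R]) ^ 2] :=
        condExp_indep_eq hR.comap_le hm
          ((Measurable.of_comap_le le_rfl).sub_const _ |>.pow_const 2).stronglyMeasurable hind
    _ = fun _ => Var[R; P] := by rw [variance_eq_integral hR.aemeasurable]

theorem IndepFun.prodMk_right_of_indepFun_prodMk [IsProbabilityMeasure P]
    {α β γ : Type*} [MeasurableSpace α] [MeasurableSpace β] [MeasurableSpace γ]
    {X : Ω → α} {Y : Ω → β} {Z : Ω → γ} (hX : Measurable X) (hY : Measurable Y)
    (hZ : Measurable Z) (hXY : IndepFun X Y P)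
    (hXYZ : IndepFun (fun ω => (X ω, Y ω)) Z P) :
    IndepFun X (fun ω => (Y ω, Z ω)) P := by
  have hYZ : IndepFun Y Z P := hXYZ.comp measurable_snd measurable_id
  rw [indepFun_iff_map_prod_eq_prod_map_map hX.aemeasurable (hY.prodMk hZ).aemeasurable,
    (indepFun_iff_map_prod_eq_prod_map_map hY.aemeasurable hZ.aemeasurable).mp hYZ]
  rw [indepFun_iff_map_prod_eq_prod_map_map (hX.prodMk hY).aemeasurable hZ.aemeasurable,
    (indepFun_iff_map_prod_eq_prod_map_map hX.aemeasurable hY.aemeasurable).mp hXY] at hXYZ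
  have := Measure.isProbabilityMeasure_map (μ := P) hX.aemeasurable
  have := Measure.isProbabilityMeasure_map (μ := P) hY.aemeasurable
  have := Measure.isProbabilityMeasure_map (μ := P) hZ.aemeasurable
  calc P.map (fun ω => (X ω, Y ω, Z ω))
      = (P.map (fun ω => ((X ω, Y ω), Z ω))).map MeasurableEquiv.prodAssoc := by
        rw [Measure.map_map MeasurableEquiv.prodAssoc.measurable
          ((hX.prodMk hY).prodMk hZ)]
        rfl
    _ = (P.map X).prod ((P.map Y).prod (P.map Z)) := by
        rw [hXYZ, Measure.prodAssoc_prod]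

section LinearCombination

variable {X Y : Ω → ℝ}

theorem covariance_add_mul_of_indepFun [IsFiniteMeasure P]
    (hX : MemLp X 2 P) (hY : MemLp Y 2 P) (hXY : IndepFun X Y P) (a b c d : ℝ) :
    cov[fun ω => a * X ω + b * Y ω, fun ω => c * X ω + d * Y ω; P]
      = a * c * Var[X; P] + b * d * Var[Y; P] := by
  have hXY0 : cov[X, Y; P] = 0 := hXY.covariance_eq_zero hX hY
  have hYX0 : cov[Y, X; P] = 0 := by rw [covariance_comm, hXY0]
  have hcX := hX.const_mul c
  have hdY := hY.const_mul d
  change cov[(fun ω => a * X ω) + (fun ω => b * Y ω), (fun ω => c * X ω) + (fun ω => d * Y ω); P]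
    = _
  rw [covariance_add_left (hX.const_mul a) (hY.const_mul b) (hcX.add hdY),
    covariance_add_right (hX.const_mul a) hcX hdY, covariance_add_right (hY.const_mul b) hcX hdY]
  simp only [covariance_const_mul_left, covariance_const_mul_right, hXY0, hYX0,
    covariance_self hX.aemeasurable, covariance_self hY.aemeasurable]
  ring

theorem HasGaussianLaw.linearCombination (hXY : HasGaussianLaw (fun ω => (X ω, Y ω)) P)
    (a b c d : ℝ) :
    HasGaussianLaw (fun ω => (a * X ω + b * Y ω, c * X ω + d * Y ω)) P := by
  have := hXY.map_fun ((a • ContinuousLinearMap.fst ℝ ℝ ℝ + b • ContinuousLinearMap.snd ℝ ℝ ℝ).prod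
    (c • ContinuousLinearMap.fst ℝ ℝ ℝ + d • ContinuousLinearMap.snd ℝ ℝ ℝ))
  simpa using this

theorem IndepFun.indepFun_linearCombination_of_hasGaussianLaw [IsProbabilityMeasure P]
    (hX : HasGaussianLaw X P) (hY : HasGaussianLaw Y P) (hXY : IndepFun X Y P) {a b c d : ℝ}
    (h : a * c * Var[X; P] + b * d * Var[Y; P] = 0) :
    IndepFun (fun ω => a * X ω + b * Y ω) (fun ω => c * X ω + d * Y ω) P :=
  ((hXY.hasGaussianLaw hX hY).linearCombination a b c d).indepFun_of_covariance_eq_zero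
    (by rw [covariance_add_mul_of_indepFun hX.memLp_two hY.memLp_two hXY, h])

/- `hk` says `k = cov[X, S] / Var[S]` for `S = a X + Y`: `k S` is the regression of `X` on `S`. -/
theorem IndepFun.indepFun_sub_mul_of_hasGaussianLaw [IsProbabilityMeasure P]
    (hX : HasGaussianLaw X P) (hY : HasGaussianLaw Y P) (hXY : IndepFun X Y P) {a k : ℝ}
    (hk : k * (a ^ 2 * Var[X; P] + Var[Y; P]) = a * Var[X; P]) :
    IndepFun (fun ω => X ω - k * (a * X ω + Y ω)) (fun ω => a * X ω + Y ω) P := by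
  have h := hXY.indepFun_linearCombination_of_hasGaussianLaw hX hY
    (a := 1 - k * a) (b := -k) (c := a) (d := 1) (by linear_combination -hk)
  convert h using 2 <;> ring

theorem IndepFun.variance_sub_mul [IsFiniteMeasure P] (hX : MemLp X 2 P) (hY : MemLp Y 2 P)
    (hXY : IndepFun X Y P) {a k : ℝ} (hk : k * (a ^ 2 * Var[X; P] + Var[Y; P]) = a * Var[X; P]) :
    Var[fun ω => X ω - k * (a * X ω + Y ω); P] = (1 - k * a) * Var[X; P] := by
  have h := covariance_add_mul_of_indepFun hX hY hXY (1 - k * a) (-k) (1 - k * a) (-k)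
  rw [covariance_self (X := fun ω => (1 - k * a) * X ω + -k * Y ω)
    ((hX.const_mul _).add (hY.const_mul _)).aemeasurable] at h
  convert h using 1
  · congr 1; funext ω; ring
  · linear_combination (-k) * hk

end LinearCombination

end ProbabilityTheory

section MeasurementErrorModel

variable {Ω : Type*} {d : ℕ} {Astar : Ω → ℝ} {W : Ω → Fin d → ℝ} {εA εM A M : Ω → ℝ}
  {γ₀ γ₁ α₀ α₁ : ℝ} {γ₂ α₂ : Fin d → ℝ}

theorem comap_sup_comap_sup_comap_le_comap_noise [MeasurableSpace Ω]
    (hA : A = fun ω => γ₀ + γ₁ * Astar ω + (∑ i, γ₂ i * W ω i) + εA ω)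
    (hM : M = fun ω => α₀ + α₁ * A ω + (∑ i, α₂ i * W ω i) + εM ω) :
    MeasurableSpace.comap Astar inferInstance ⊔ MeasurableSpace.comap M inferInstance ⊔
        MeasurableSpace.comap W inferInstance
      ≤ MeasurableSpace.comap (fun ω => (α₁ * εA ω + εM ω, Astar ω, W ω)) inferInstance := by
  have hT := comap_measurable (m := inferInstance) fun ω => (α₁ * εA ω + εM ω, Astar ω, W ω)
  have hM' : M = fun ω => α₀ + α₁ * (γ₀ + γ₁ * Astar ω + ∑ i, γ₂ i * W ω i)
      + ∑ i, α₂ i * W ω i + (α₁ * εA ω + εM ω) := by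
    rw [hM, hA]; funext ω; ring
  rw [hM']
  refine sup_le (sup_le hT.snd.fst.comap_le ?_) hT.snd.snd.comap_le
  exact (Measurable.comp (g := fun p : ℝ × ℝ × (Fin d → ℝ) =>
    α₀ + α₁ * (γ₀ + γ₁ * p.2.1 + ∑ i, γ₂ i * p.2.2 i) + ∑ i, α₂ i * p.2.2 i + p.1)
    (by fun_prop) hT).comap_le

theorem measurable_sub_noiseResidual
    (hA : A = fun ω => γ₀ + γ₁ * Astar ω + (∑ i, γ₂ i * W ω i) + εA ω)
    (hM : M = fun ω => α₀ + α₁ * A ω + (∑ i, α₂ i * W ω i) + εM ω) (k : ℝ) :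
    Measurable[MeasurableSpace.comap Astar inferInstance ⊔ MeasurableSpace.comap M inferInstance ⊔
        MeasurableSpace.comap W inferInstance]
      fun ω => A ω - (εA ω - k * (α₁ * εA ω + εM ω)) := by
  set G : MeasurableSpace Ω := MeasurableSpace.comap Astar inferInstance ⊔
    MeasurableSpace.comap M inferInstance ⊔ MeasurableSpace.comap W inferInstance
  have hAstar : Measurable[G] Astar := Measurable.of_comap_le (le_sup_left.trans le_sup_left)
  have hMm : Measurable[G] M := Measurable.of_comap_le (le_sup_right.trans le_sup_left)
  have hW : Measurable[G] W := Measurable.of_comap_le le_sup_right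
  have hB : (fun ω => A ω - (εA ω - k * (α₁ * εA ω + εM ω))) =
      fun ω => γ₀ + γ₁ * Astar ω + ∑ i, γ₂ i * W ω i + k *
        (M ω - α₀ - α₁ * (γ₀ + γ₁ * Astar ω + ∑ i, γ₂ i * W ω i) - ∑ i, α₂ i * W ω i) := by
    rw [hM, hA]; funext ω; ring
  rw [hB]
  fun_prop

theorem indep_comap_noiseResidual [MeasurableSpace Ω] {P : Measure Ω} [IsProbabilityMeasure P]
    (hA : A = fun ω => γ₀ + γ₁ * Astar ω + (∑ i, γ₂ i * W ω i) + εA ω)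
    (hM : M = fun ω => α₀ + α₁ * A ω + (∑ i, α₂ i * W ω i) + εM ω)
    (hAstar : Measurable Astar) (hW : Measurable W) (hεA : Measurable εA) (hεM : Measurable εM)
    (hindObs : IndepFun (fun ω => (εA ω, εM ω)) (fun ω => (Astar ω, W ω)) P) {k : ℝ}
    (hRS : IndepFun (fun ω => εA ω - k * (α₁ * εA ω + εM ω)) (fun ω => α₁ * εA ω + εM ω) P) :
    Indep (MeasurableSpace.comap (fun ω => εA ω - k * (α₁ * εA ω + εM ω)) inferInstance)
      (MeasurableSpace.comap Astar inferInstance ⊔ MeasurableSpace.comap M inferInstance ⊔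
        MeasurableSpace.comap W inferInstance) P := by
  have hRSO := IndepFun.prodMk_right_of_indepFun_prodMk (by fun_prop) (by fun_prop)
    (hAstar.prodMk hW) hRS
    (hindObs.comp (φ := fun e : ℝ × ℝ => (e.1 - k * (α₁ * e.1 + e.2), α₁ * e.1 + e.2))
      (by fun_prop) measurable_id)
  exact indep_of_indep_of_le_right ((IndepFun_iff_Indep _ _ _).mp hRSO)
    (comap_sup_comap_sup_comap_le_comap_noise hA hM)

theorem integrable_exposure [MeasurableSpace Ω] {P : Measure Ω} [IsFiniteMeasure P]
    (hA : A = fun ω => γ₀ + γ₁ * Astar ω + (∑ i, γ₂ i * W ω i) + εA ω)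
    (hAstar : Integrable Astar P) (hW : Integrable W P) (hεA : Integrable εA P) :
    Integrable A P := by
  rw [hA]
  exact (((integrable_const γ₀).add (hAstar.const_mul γ₁)).add
    (integrable_finsetSum _ fun i _ => (hW.eval i).const_mul _)).add hεA

end MeasurementErrorModel

/-- Under the measurement error model `A = γ₀ + γ₁ A* + γ₂ᵀW + ε_A`
and mediator model `M = α₀ + α₁ A + α₂ᵀW + ε_M` with independent normal errors,
the conditional variance of the true exposure `A` given the observed data `(A*, M, W)`
is constant: almost surely `E[(A − E[A | A*, M, W])² | A*, M, W] = σα²σγ²/D`,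
where `D = α₁²σγ² + σα²`. -/
theorem stmt_8
    {Ω : Type*} [m0 : MeasurableSpace Ω] (P : Measure Ω) [IsProbabilityMeasure P]
    (d : ℕ) (Astar : Ω → ℝ) (W : Ω → Fin d → ℝ) (εA εM : Ω → ℝ)
    (hAstarMeas : Measurable Astar) (hWMeas : Measurable W)
    (hεAMeas : Measurable εA) (hεMMeas : Measurable εM)
    (hAstarL2 : MemLp Astar 2 P) (hWL2 : MemLp W 2 P)
    (σγ2 σα2 : ℝ) (hσγ : 0 < σγ2) (hσα : 0 < σα2)
    (hlawA : P.map εA = gaussianReal 0 ⟨σγ2, hσγ.le⟩)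
    (hlawM : P.map εM = gaussianReal 0 ⟨σα2, hσα.le⟩)
    (hindEps : IndepFun εA εM P)
    (hindObs : IndepFun (fun ω => (εA ω, εM ω)) (fun ω => (Astar ω, W ω)) P)
    (γ₀ γ₁ α₀ α₁ : ℝ) (γ₂ α₂ : Fin d → ℝ)
    (A M : Ω → ℝ)
    (hA : A = fun ω => γ₀ + γ₁ * Astar ω + (∑ i, γ₂ i * W ω i) + εA ω)
    (hM : M = fun ω => α₀ + α₁ * A ω + (∑ i, α₂ i * W ω i) + εM ω)
    (D : ℝ) (hD : D = α₁ ^ 2 * σγ2 + σα2)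
    (G : MeasurableSpace Ω)
    (hG : G = MeasurableSpace.comap Astar inferInstance ⊔
      MeasurableSpace.comap M inferInstance ⊔ MeasurableSpace.comap W inferInstance) :
    P[fun ω => (A ω - (P[A | G]) ω) ^ 2 | G] =ᵐ[P] fun _ => σα2 * σγ2 / D := by
  subst hG
  -- `set` retypes the anonymous constructors as `NNReal`, so that `IsGaussian` instances are found
  set vA : NNReal := ⟨σγ2, hσγ.le⟩
  set vM : NNReal := ⟨σα2, hσα.le⟩
  have hεA : HasLaw εA (gaussianReal 0 vA) P := ⟨hεAMeas.aemeasurable, hlawA⟩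
  have hεM : HasLaw εM (gaussianReal 0 vM) P := ⟨hεMMeas.aemeasurable, hlawM⟩
  have hvarA : Var[εA; P] = σγ2 := by rw [hεA.variance_eq, variance_id_gaussianReal]; rfl
  have hvarM : Var[εM; P] = σα2 := by rw [hεM.variance_eq, variance_id_gaussianReal]; rfl
  have hk : α₁ * σγ2 / D * (α₁ ^ 2 * Var[εA; P] + Var[εM; P]) = α₁ * Var[εA; P] := by
    rw [hvarA, hvarM, ← hD]; field_simp [show D ≠ 0 by rw [hD]; positivity]
  set R : Ω → ℝ := fun ω => εA ω - α₁ * σγ2 / D * (α₁ * εA ω + εM ω)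
  have hRS := hindEps.indepFun_sub_mul_of_hasGaussianLaw hεA.hasGaussianLaw hεM.hasGaussianLaw hk
  have hvarR : Var[R; P] = σα2 * σγ2 / D := by
    rw [hindEps.variance_sub_mul hεA.hasGaussianLaw.memLp_two hεM.hasGaussianLaw.memLp_two hk,
      hvarA, hD]
    field_simp
    ring
  have hRL2 : MemLp R 2 P := hεA.hasGaussianLaw.memLp_two.sub
    (((hεA.hasGaussianLaw.memLp_two.const_mul α₁).add hεM.hasGaussianLaw.memLp_two).const_mul _)
  have hGm := (comap_sup_comap_sup_comap_le_comap_noise hA hM).trans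
    (((hεAMeas.const_mul α₁).add hεMMeas).prodMk (hAstarMeas.prodMk hWMeas)).comap_le
  have key := condVar_add_of_indep (B := A - R) hGm
    (measurable_sub_noiseResidual hA hM _).stronglyMeasurable
    ((integrable_exposure hA (hAstarL2.integrable one_le_two) (hWL2.integrable one_le_two)
      hεA.hasGaussianLaw.integrable).sub (hRL2.integrable one_le_two)) (by fun_prop) hRL2
    (indep_comap_noiseResidual hA hM hAstarMeas hWMeas hεAMeas hεMMeas hindObs hRS)
  rwa [sub_add_cancel, hvarR] at key
end

section
/- Let (Ω, F, P) be a probability space, A* : Ω → ℝ and W : Ω → ℝ^d square-integrable random variables, and ε_A, ε_M square-integrable real random variables with mean 0 and variances σγ² and σα² respectively, with ε_A and ε_M independent of each other and the pair (ε_A, ε_M) independent of (A*, W). Define A = γ₀ + γ₁A* + γ₂ᵀW + ε_A, M = α₀ + α₁A + α₂ᵀW + ε_M, and μ_A = γ₀ + γ₁A* + γ₂ᵀW. Then the regression-calibration estimating equations are unbiased at the true parameters: E[(1, μ_A, Wᵀ)ᵀ · (M − α₀ − α₁μ_A − α₂ᵀW)] = 0 (a zero vector in ℝ^{d+2}), and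 E[(M − α₀ − α₁μ_A − α₂ᵀW)²] = σα² + α₁²σγ². -/
/-!
The calibration residual `M − α₀ − α₁ μ_A − α₂ᵀW` equals `α₁ ε_A + ε_M`: replacing `A` by its
conditional mean leaves exactly the measurement error `ε_A`, scaled by `α₁`. This residual is a
function of `(ε_A, ε_M)`, hence independent of every function of `(A*, W)`, such as `μ_A` and the
coordinates of `W`, and it has mean zero, so it is orthogonal to them. Its second moment is its
variance, which splits over the independent errors as `α₁² σγ² + σα²`.
-/

open MeasureTheory ProbabilityTheory

namespace ProbabilityTheory

variable {Ω : Type*} [MeasurableSpace Ω] {P : Measure Ω}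

lemma IndepFun.integral_mul_eq_zero_of_integral_eq_zero {g e : Ω → ℝ} (hge : IndepFun g e P)
    (hg : AEStronglyMeasurable g P) (he : AEStronglyMeasurable e P) (he0 : ∫ ω, e ω ∂P = 0) :
    ∫ ω, g ω * e ω ∂P = 0 := by
  simpa [he0] using hge.integral_mul_eq_mul_integral hg he

lemma integral_const_mul_add_sq_of_indepFun [IsFiniteMeasure P] {X Y : Ω → ℝ} (a : ℝ)
    (hX : MemLp X 2 P) (hY : MemLp Y 2 P) (hXY : IndepFun X Y P)
    (hX0 : ∫ ω, X ω ∂P = 0) (hY0 : ∫ ω, Y ω ∂P = 0) :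
    ∫ ω, (a * X ω + Y ω) ^ 2 ∂P = a ^ 2 * ∫ ω, X ω ^ 2 ∂P + ∫ ω, Y ω ^ 2 ∂P := by
  have haX : MemLp (fun ω => a * X ω) 2 P := hX.const_mul a
  have hsum0 : ∫ ω, (a * X ω + Y ω) ∂P = 0 := by
    rw [integral_add (haX.integrable one_le_two) (hY.integrable one_le_two),
      integral_const_mul, hX0, hY0]
    ring
  have hsum : MemLp (fun ω => a * X ω + Y ω) 2 P := haX.add hY
  rw [← variance_of_integral_eq_zero hsum.aemeasurable hsum0,
    ← variance_of_integral_eq_zero hX.aemeasurable hX0,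
    ← variance_of_integral_eq_zero hY.aemeasurable hY0, ← variance_const_mul]
  exact (hXY.comp (measurable_const_mul a) measurable_id).variance_add haX hY

end ProbabilityTheory

theorem stmt_11_general
    {Ω : Type*} [m0 : MeasurableSpace Ω] (P : Measure Ω) [IsProbabilityMeasure P]
    (d : ℕ) (Astar : Ω → ℝ) (W : Ω → Fin d → ℝ) (εA εM : Ω → ℝ)
    (hAstarMeas : Measurable Astar) (hWMeas : Measurable W)
    (hεAL2 : MemLp εA 2 P) (hεML2 : MemLp εM 2 P)
    (σγ2 σα2 : ℝ)
    (hmeanA : ∫ ω, εA ω ∂P = 0) (hmeanM : ∫ ω, εM ω ∂P = 0)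
    (hvarA : ∫ ω, εA ω ^ 2 ∂P = σγ2) (hvarM : ∫ ω, εM ω ^ 2 ∂P = σα2)
    (hindEps : IndepFun εA εM P)
    (hindObs : IndepFun (fun ω => (εA ω, εM ω)) (fun ω => (Astar ω, W ω)) P)
    (γ₀ γ₁ α₀ α₁ : ℝ) (γ₂ α₂ : Fin d → ℝ)
    (A M μA : Ω → ℝ)
    (hA : A = fun ω => γ₀ + γ₁ * Astar ω + (∑ i, γ₂ i * W ω i) + εA ω)
    (hM : M = fun ω => α₀ + α₁ * A ω + (∑ i, α₂ i * W ω i) + εM ω)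
    (hμA : μA = fun ω => γ₀ + γ₁ * Astar ω + (∑ i, γ₂ i * W ω i)) :
    (∫ ω, (M ω - α₀ - α₁ * μA ω - (∑ i, α₂ i * W ω i)) ∂P = 0) ∧
    (∫ ω, μA ω * (M ω - α₀ - α₁ * μA ω - (∑ i, α₂ i * W ω i)) ∂P = 0) ∧
    (∀ j : Fin d,
      ∫ ω, W ω j * (M ω - α₀ - α₁ * μA ω - (∑ i, α₂ i * W ω i)) ∂P = 0) ∧
    (∫ ω, (M ω - α₀ - α₁ * μA ω - (∑ i, α₂ i * W ω i)) ^ 2 ∂P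
      = σα2 + α₁ ^ 2 * σγ2) := by
  have hres : ∀ ω, M ω - α₀ - α₁ * μA ω - (∑ i, α₂ i * W ω i) = α₁ * εA ω + εM ω := by
    intro ω
    subst hM hA hμA
    ring
  simp only [hres]
  have hres_meas : AEStronglyMeasurable (fun ω => α₁ * εA ω + εM ω) P :=
    (hεAL2.const_mul α₁).add hεML2 |>.aestronglyMeasurable
  have hres_mean : ∫ ω, (α₁ * εA ω + εM ω) ∂P = 0 := by
    rw [integral_add ((hεAL2.integrable one_le_two).const_mul α₁) (hεML2.integrable one_le_two),
      integral_const_mul, hmeanA, hmeanM]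
    ring
  have hres_orth : ∀ ψ : ℝ × (Fin d → ℝ) → ℝ, Measurable ψ →
      ∫ ω, ψ (Astar ω, W ω) * (α₁ * εA ω + εM ω) ∂P = 0 := fun ψ hψ =>
    (hindObs.comp (φ := fun p : ℝ × ℝ => α₁ * p.1 + p.2) (by fun_prop) hψ).symm
      |>.integral_mul_eq_zero_of_integral_eq_zero
        ((hψ.comp (hAstarMeas.prodMk hWMeas)).aestronglyMeasurable) hres_meas hres_mean
  refine ⟨hres_mean, ?_, fun j => hres_orth (fun q => q.2 j) (by fun_prop), ?_⟩
  · subst hμA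
    exact hres_orth (fun q => γ₀ + γ₁ * q.1 + ∑ i, γ₂ i * q.2 i) (by fun_prop)
  · rw [integral_const_mul_add_sq_of_indepFun α₁ hεAL2 hεML2 hindEps hmeanA hmeanM, hvarA, hvarM]
    ring

/-- The regression-calibration estimating equations for the mediator
model are unbiased at the true parameters: with `μ_A = γ₀ + γ₁ A* + γ₂ᵀW`,
`E[(1, μ_A, Wᵀ)ᵀ (M − α₀ − α₁ μ_A − α₂ᵀW)] = 0 ∈ ℝ^{d+2}` and
`E[(M − α₀ − α₁ μ_A − α₂ᵀW)²] = σα² + α₁²σγ²`. -/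
theorem stmt_11
    {Ω : Type*} [m0 : MeasurableSpace Ω] (P : Measure Ω) [IsProbabilityMeasure P]
    (d : ℕ) (Astar : Ω → ℝ) (W : Ω → Fin d → ℝ) (εA εM : Ω → ℝ)
    (hAstarMeas : Measurable Astar) (hWMeas : Measurable W)
    (hεAMeas : Measurable εA) (hεMMeas : Measurable εM)
    (hAstarL2 : MemLp Astar 2 P) (hWL2 : MemLp W 2 P)
    (hεAL2 : MemLp εA 2 P) (hεML2 : MemLp εM 2 P)
    (σγ2 σα2 : ℝ)
    (hmeanA : ∫ ω, εA ω ∂P = 0) (hmeanM : ∫ ω, εM ω ∂P = 0)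
    (hvarA : ∫ ω, εA ω ^ 2 ∂P = σγ2) (hvarM : ∫ ω, εM ω ^ 2 ∂P = σα2)
    (hindEps : IndepFun εA εM P)
    (hindObs : IndepFun (fun ω => (εA ω, εM ω)) (fun ω => (Astar ω, W ω)) P)
    (γ₀ γ₁ α₀ α₁ : ℝ) (γ₂ α₂ : Fin d → ℝ)
    (A M μA : Ω → ℝ)
    (hA : A = fun ω => γ₀ + γ₁ * Astar ω + (∑ i, γ₂ i * W ω i) + εA ω)
    (hM : M = fun ω => α₀ + α₁ * A ω + (∑ i, α₂ i * W ω i) + εM ω)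
    (hμA : μA = fun ω => γ₀ + γ₁ * Astar ω + (∑ i, γ₂ i * W ω i)) :
    (∫ ω, (M ω - α₀ - α₁ * μA ω - (∑ i, α₂ i * W ω i)) ∂P = 0) ∧
    (∫ ω, μA ω * (M ω - α₀ - α₁ * μA ω - (∑ i, α₂ i * W ω i)) ∂P = 0) ∧
    (∀ j : Fin d,
      ∫ ω, W ω j * (M ω - α₀ - α₁ * μA ω - (∑ i, α₂ i * W ω i)) ∂P = 0) ∧
    (∫ ω, (M ω - α₀ - α₁ * μA ω - (∑ i, α₂ i * W ω i)) ^ 2 ∂P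
      = σα2 + α₁ ^ 2 * σγ2) :=
  stmt_11_general (m0 := m0) P d Astar W εA εM hAstarMeas hWMeas hεAL2 hεML2 σγ2 σα2 hmeanA hmeanM
    hvarA hvarM hindEps hindObs γ₀ γ₁ α₀ α₁ γ₂ α₂ A M μA hA hM hμA
end

section
/- Let μ, b₁, b₂ ∈ ℝ, σ > 0, Λ ≥ 0, and let M ~ N(μ, σ²). Then E[e^{b₁ + b₂M} exp(−Λ e^{b₁ + b₂M})] = e^{b₁ + b₂μ + b₂²σ²/2} · ∫ exp(−Λ e^{b₂²σ² + b₁ + b₂m}) dN(μ, σ²)(m). Consequently, the marginal hazard of a failure time whose conditional survival given M = m is exp(−Λ(t) e^{b₁ + b₂m}) equals the baseline hazard times e^{b₁ + b₂μ + b₂²σ²/2} · r(Λ(t)), where r(Λ) = [∫ exp(−Λ e^{b₂²σ² + b₁ + b₂m}) dN(μ, σ²)(m)] / [∫ exp(−Λ e^{b₁ + b₂m}) dN(μ, σ²)(m)]. -/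
/-!
Completing the square, `e^{tx}` times the `N(μ, v)` density is `e^{μt + vt²/2}` times the
`N(μ + vt, v)` density. So the weight `e^{b₂ m}` in the marginal hazard numerator is absorbed by
shifting the mediator by `b₂σ²`, which turns `e^{b₁ + b₂ m}` inside the survival function into
`e^{b₂²σ² + b₁ + b₂ m}`. Dividing by the untilted survival integral gives the hazard ratio.
-/

open MeasureTheory ProbabilityTheory Real
open scoped NNReal

namespace ProbabilityTheory

variable {E : Type*} [NormedAddCommGroup E] [NormedSpace ℝ E]

lemma gaussianPDFReal_mul_exp_mul (μ : ℝ) (v : ℝ≥0) (t x : ℝ) :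
    gaussianPDFReal μ v x * exp (t * x)
      = exp (μ * t + v * t ^ 2 / 2) * gaussianPDFReal (μ + v * t) v x := by
  rcases eq_or_ne v 0 with rfl | hv
  · simp
  have hv' : (v : ℝ) ≠ 0 := by exact_mod_cast hv
  simp only [gaussianPDFReal]
  rw [mul_left_comm, mul_assoc, ← exp_add, ← exp_add]
  congr 2
  field_simp
  ring

theorem integral_exp_mul_smul_gaussianReal [CompleteSpace E] (μ : ℝ) (v : ℝ≥0) (t : ℝ)
    (g : ℝ → E) :
    ∫ x, exp (t * x) • g x ∂gaussianReal μ v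
      = exp (μ * t + v * t ^ 2 / 2) • ∫ x, g x ∂gaussianReal (μ + v * t) v := by
  rcases eq_or_ne v 0 with rfl | hv
  · simp [gaussianReal_zero_var, mul_comm]
  rw [integral_gaussianReal_eq_integral_smul hv, integral_gaussianReal_eq_integral_smul hv,
    ← integral_smul]
  congr 1
  ext x
  rw [smul_smul, gaussianPDFReal_mul_exp_mul, mul_smul]

theorem integral_gaussianReal_add_mean (μ y : ℝ) (v : ℝ≥0) (g : ℝ → E) :
    ∫ x, g x ∂gaussianReal (μ + y) v = ∫ x, g (x + y) ∂gaussianReal μ v := by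
  rw [← gaussianReal_map_add_const, (measurableEmbedding_addRight y).integral_map]

theorem integral_exp_mul_smul_gaussianReal_eq_shift [CompleteSpace E] (μ : ℝ) (v : ℝ≥0)
    (t : ℝ) (g : ℝ → E) :
    ∫ x, exp (t * x) • g x ∂gaussianReal μ v
      = exp (μ * t + v * t ^ 2 / 2) • ∫ x, g (x + v * t) ∂gaussianReal μ v := by
  rw [integral_exp_mul_smul_gaussianReal, integral_gaussianReal_add_mean]

end ProbabilityTheory

theorem stmt_14_general (μ b₁ b₂ σ Λ : ℝ)
    (ν : Measure ℝ) (hν : ν = gaussianReal μ ⟨σ ^ 2, sq_nonneg σ⟩)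
    (r : ℝ → ℝ)
    (hr : r = fun L =>
      (∫ m, exp (-(L * exp (b₂ ^ 2 * σ ^ 2 + b₁ + b₂ * m))) ∂ν)
        / (∫ m, exp (-(L * exp (b₁ + b₂ * m))) ∂ν)) :
    (∫ m, exp (b₁ + b₂ * m) * exp (-(Λ * exp (b₁ + b₂ * m))) ∂ν
        = exp (b₁ + b₂ * μ + b₂ ^ 2 * σ ^ 2 / 2)
          * ∫ m, exp (-(Λ * exp (b₂ ^ 2 * σ ^ 2 + b₁ + b₂ * m))) ∂ν) ∧
    ((∫ m, exp (b₁ + b₂ * m) * exp (-(Λ * exp (b₁ + b₂ * m))) ∂ν)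
        / (∫ m, exp (-(Λ * exp (b₁ + b₂ * m))) ∂ν)
      = exp (b₁ + b₂ * μ + b₂ ^ 2 * σ ^ 2 / 2) * r Λ) := by
  have hweighted : ∫ m, exp (b₁ + b₂ * m) * exp (-(Λ * exp (b₁ + b₂ * m))) ∂ν
      = exp (b₁ + b₂ * μ + b₂ ^ 2 * σ ^ 2 / 2)
          * ∫ m, exp (-(Λ * exp (b₂ ^ 2 * σ ^ 2 + b₁ + b₂ * m))) ∂ν := by
    subst hν
    calc _ = ∫ m, exp (b₂ * m) • (exp b₁ * exp (-(Λ * exp (b₁ + b₂ * m))))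
          ∂gaussianReal μ ⟨σ ^ 2, sq_nonneg σ⟩ := by
          congr 1; ext m; simp only [exp_add, smul_eq_mul]; ring
      _ = exp (μ * b₂ + σ ^ 2 * b₂ ^ 2 / 2) * ∫ m, exp b₁
            * exp (-(Λ * exp (b₁ + b₂ * (m + σ ^ 2 * b₂))))
            ∂gaussianReal μ ⟨σ ^ 2, sq_nonneg σ⟩ :=
          integral_exp_mul_smul_gaussianReal_eq_shift _ _ _ _
      _ = _ := by
          rw [integral_const_mul, ← mul_assoc, ← exp_add]
          ring_nf
  refine ⟨hweighted, ?_⟩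
  rw [hweighted, hr, mul_div_assoc]

/-- For `M ~ N(μ, σ²)`, `Λ ≥ 0`, and linear predictor `b₁ + b₂ m`,
`E[e^{b₁ + b₂ M} exp(−Λ e^{b₁ + b₂ M})]
  = e^{b₁ + b₂ μ + b₂²σ²/2} ∫ exp(−Λ e^{b₂²σ² + b₁ + b₂ m}) dN(μ, σ²)(m)`.
Consequently, the marginal hazard of a failure time whose conditional survival given
`M = m` is `exp(−Λ(t) e^{b₁ + b₂ m})` equals the baseline hazard times
`e^{b₁ + b₂ μ + b₂²σ²/2} · r(Λ(t))`, where `r(Λ)` is the ratio of the tilted and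
untilted Gaussian survival integrals; i.e. the ratio of the two Gaussian integrals
defining the marginal hazard factor equals `e^{b₁ + b₂ μ + b₂²σ²/2} · r(Λ)`. -/
theorem stmt_14 (μ b₁ b₂ σ Λ : ℝ) (hσ : 0 < σ) (hΛ : 0 ≤ Λ)
    (ν : Measure ℝ) (hν : ν = gaussianReal μ ⟨σ ^ 2, sq_nonneg σ⟩)
    (r : ℝ → ℝ)
    (hr : r = fun L =>
      (∫ m, exp (-(L * exp (b₂ ^ 2 * σ ^ 2 + b₁ + b₂ * m))) ∂ν)
        / (∫ m, exp (-(L * exp (b₁ + b₂ * m))) ∂ν)) :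
    (∫ m, exp (b₁ + b₂ * m) * exp (-(Λ * exp (b₁ + b₂ * m))) ∂ν
        = exp (b₁ + b₂ * μ + b₂ ^ 2 * σ ^ 2 / 2)
          * ∫ m, exp (-(Λ * exp (b₂ ^ 2 * σ ^ 2 + b₁ + b₂ * m))) ∂ν) ∧
    ((∫ m, exp (b₁ + b₂ * m) * exp (-(Λ * exp (b₁ + b₂ * m))) ∂ν)
        / (∫ m, exp (-(Λ * exp (b₁ + b₂ * m))) ∂ν)
      = exp (b₁ + b₂ * μ + b₂ ^ 2 * σ ^ 2 / 2) * r Λ) :=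
  stmt_14_general μ b₁ b₂ σ Λ ν hν r hr
end

section
/- Fix parameters α₀, α₁ ∈ ℝ, α₂ ∈ ℝ^d, σα > 0, β₁, β₂, β₃ ∈ ℝ, β₄ ∈ ℝ^d, a covariate value w ∈ ℝ^d, and exposure levels a, a′ ∈ ℝ. For Λ > 0 define μ_{a′} = α₀ + α₁a′ + α₂ᵀw, r_{a,a′}(Λ) = [∫ exp(−Λ e^{(β₂ + β₃a)²σα² + β₁a + β₂m + β₃am + β₄ᵀw}) dN(μ_{a′}, σα²)(m)] / [∫ exp(−Λ e^{β₁a + β₂m + β₃am + β₄ᵀw}) dN(μ_{a′}, σα²)(m)], and δ(Λ; a, a′) = log r_{a,a′}(Λ) + (β₁a + β₄ᵀw) + (β₂ + β₃a)(α₀ + α₁a′ + α₂ᵀw) + (1/2)(β₂ + β₃a)²σα². Then the natural indirect effect expression converges to its rare-outcome approximation: lim_{Λ→0⁺} [δ(Λ; a, a) − δ(Λ; a, a*)] = (β₂α₁ + β₃α₁a)(a − a*). -/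
open MeasureTheory ProbabilityTheory Real Filter Topology

/-
As `Λ → 0⁺` every integrand `exp (-(Λ * exp (g m)))` tends to `1` and is bounded by `1`, so by
dominated convergence each of the two Gaussian integrals defining `r a a' Λ` tends to `1`, hence
`log (r a a' Λ) → 0` for every `a'`. The remaining terms of `δ Λ a a - δ Λ a astar` do not depend
on `Λ` and add up to `(β₂ + β₃ a) α₁ (a - astar)`.
-/

theorem tendsto_integral_exp_neg_mul_exp_nhdsGT_zero {Ω : Type*} [MeasurableSpace Ω]
    (μ : Measure Ω) [IsFiniteMeasure μ] {g : Ω → ℝ} (hg : Measurable g) :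
    Tendsto (fun Λ : ℝ => ∫ m, exp (-(Λ * exp (g m))) ∂μ) (𝓝[>] 0) (𝓝 (μ.real Set.univ)) := by
  have hbound : ∀ᶠ Λ in 𝓝[>] (0 : ℝ), ∀ᵐ m ∂μ, ‖exp (-(Λ * exp (g m)))‖ ≤ 1 := by
    filter_upwards [self_mem_nhdsWithin] with Λ (hΛ : 0 < Λ)
    refine ae_of_all _ fun m => ?_
    rw [Real.norm_of_nonneg (exp_pos _).le, exp_le_one_iff, neg_nonpos]
    exact mul_nonneg hΛ.le (exp_pos _).le
  have hlim : ∀ᵐ m ∂μ, Tendsto (fun Λ : ℝ => exp (-(Λ * exp (g m)))) (𝓝[>] 0) (𝓝 1) :=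
    ae_of_all _ fun m => tendsto_nhdsWithin_of_tendsto_nhds <|
      (by fun_prop : Continuous fun Λ : ℝ => exp (-(Λ * exp (g m)))).tendsto' 0 1 (by simp)
  simpa using tendsto_integral_filter_of_dominated_convergence (fun _ => (1 : ℝ))
    (Eventually.of_forall fun Λ => (by fun_prop : Measurable _).aestronglyMeasurable)
    hbound (integrable_const 1) hlim

theorem tendsto_log_div_integral_exp_neg_mul_exp_nhdsGT_zero {Ω : Type*} [MeasurableSpace Ω]
    (μ : Measure Ω) [IsFiniteMeasure μ] [NeZero μ] {g h : Ω → ℝ}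
    (hg : Measurable g) (hh : Measurable h) :
    Tendsto (fun Λ : ℝ => log ((∫ m, exp (-(Λ * exp (g m))) ∂μ) / ∫ m, exp (-(Λ * exp (h m))) ∂μ))
      (𝓝[>] 0) (𝓝 0) := by
  have hratio := (tendsto_integral_exp_neg_mul_exp_nhdsGT_zero μ hg).div
    (tendsto_integral_exp_neg_mul_exp_nhdsGT_zero μ hh) measureReal_univ_ne_zero
  rw [div_self measureReal_univ_ne_zero] at hratio
  simpa using hratio.log one_ne_zero

theorem stmt_16_general (d : ℕ) (α₀ α₁ : ℝ) (α₂ : Fin d → ℝ) (σα : ℝ)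
    (β₁ β₂ β₃ : ℝ) (β₄ : Fin d → ℝ) (w : Fin d → ℝ) (a astar : ℝ)
    (μm : ℝ → ℝ)
    (r : ℝ → ℝ → ℝ → ℝ)
    (hr : r = fun a a' Λ =>
      (∫ m, exp (-(Λ * exp ((β₂ + β₃ * a) ^ 2 * σα ^ 2 + β₁ * a + β₂ * m + β₃ * a * m
            + ∑ i, β₄ i * w i))) ∂(gaussianReal (μm a') ⟨σα ^ 2, sq_nonneg σα⟩))
        / (∫ m, exp (-(Λ * exp (β₁ * a + β₂ * m + β₃ * a * m + ∑ i, β₄ i * w i)))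
            ∂(gaussianReal (μm a') ⟨σα ^ 2, sq_nonneg σα⟩)))
    (δ : ℝ → ℝ → ℝ → ℝ)
    (hδ : δ = fun Λ a a' => Real.log (r a a' Λ) + (β₁ * a + ∑ i, β₄ i * w i)
      + (β₂ + β₃ * a) * (α₀ + α₁ * a' + ∑ i, α₂ i * w i)
      + (1 / 2) * (β₂ + β₃ * a) ^ 2 * σα ^ 2) :
    Tendsto (fun Λ => δ Λ a a - δ Λ a astar) (nhdsWithin 0 (Set.Ioi 0))
      (nhds ((β₂ * α₁ + β₃ * α₁ * a) * (a - astar))) := by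
  have hlog_r (a' : ℝ) : Tendsto (fun Λ => log (r a a' Λ)) (𝓝[>] 0) (𝓝 0) := by
    rw [hr]
    -- instance search does not fire on a variance written as an anonymous constructor
    have := instIsProbabilityMeasureGaussianReal (μm a') ⟨σα ^ 2, sq_nonneg σα⟩
    exact tendsto_log_div_integral_exp_neg_mul_exp_nhdsGT_zero
      (gaussianReal (μm a') ⟨σα ^ 2, sq_nonneg σα⟩) (by fun_prop) (by fun_prop)
  have hδ_sub (Λ : ℝ) : δ Λ a a - δ Λ a astar
      = log (r a a Λ) - log (r a astar Λ) + (β₂ * α₁ + β₃ * α₁ * a) * (a - astar) := by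
    rw [hδ]
    ring
  simp_rw [hδ_sub]
  simpa using ((hlog_r a).sub (hlog_r astar)).add_const ((β₂ * α₁ + β₃ * α₁ * a) * (a - astar))

/-- Under the linear normal mediator model and the Cox outcome model
with exposure-mediator interaction, the exact natural indirect effect expression
`δ(Λ; a, a) − δ(Λ; a, a*)` converges, as the cumulative baseline hazard `Λ → 0⁺`
(rare outcome), to its rare-outcome approximation `(β₂α₁ + β₃α₁ a)(a − a*)`. -/
theorem stmt_16 (d : ℕ) (α₀ α₁ : ℝ) (α₂ : Fin d → ℝ) (σα : ℝ) (hσα : 0 < σα)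
    (β₁ β₂ β₃ : ℝ) (β₄ : Fin d → ℝ) (w : Fin d → ℝ) (a astar : ℝ)
    (μm : ℝ → ℝ) (hμm : μm = fun a' => α₀ + α₁ * a' + ∑ i, α₂ i * w i)
    (r : ℝ → ℝ → ℝ → ℝ)
    (hr : r = fun a a' Λ =>
      (∫ m, exp (-(Λ * exp ((β₂ + β₃ * a) ^ 2 * σα ^ 2 + β₁ * a + β₂ * m + β₃ * a * m
            + ∑ i, β₄ i * w i))) ∂(gaussianReal (μm a') ⟨σα ^ 2, sq_nonneg σα⟩))
        / (∫ m, exp (-(Λ * exp (β₁ * a + β₂ * m + β₃ * a * m + ∑ i, β₄ i * w i)))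
            ∂(gaussianReal (μm a') ⟨σα ^ 2, sq_nonneg σα⟩)))
    (δ : ℝ → ℝ → ℝ → ℝ)
    (hδ : δ = fun Λ a a' => Real.log (r a a' Λ) + (β₁ * a + ∑ i, β₄ i * w i)
      + (β₂ + β₃ * a) * (α₀ + α₁ * a' + ∑ i, α₂ i * w i)
      + (1 / 2) * (β₂ + β₃ * a) ^ 2 * σα ^ 2) :
    Tendsto (fun Λ => δ Λ a a - δ Λ a astar) (nhdsWithin 0 (Set.Ioi 0))
      (nhds ((β₂ * α₁ + β₃ * α₁ * a) * (a - astar))) :=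
  stmt_16_general d α₀ α₁ α₂ σα β₁ β₂ β₃ β₄ w a astar μm r hr δ hδ
end

section
/- Fix parameters α₀, α₁ ∈ ℝ, α₂ ∈ ℝ^d, σα > 0, β₁, β₂, β₃ ∈ ℝ, β₄ ∈ ℝ^d, a covariate value w ∈ ℝ^d, and exposure levels a, a* ∈ ℝ. With δ(Λ; a, a′) defined as the exact log-hazard expression (log r_{a,a′}(Λ) + (β₁a + β₄ᵀw) + (β₂ + β₃a)(α₀ + α₁a′ + α₂ᵀw) + (1/2)(β₂ + β₃a)²σα², where r_{a,a′}(Λ) is the ratio of Gaussian integrals ∫ exp(−Λ e^{(β₂+β₃a)²σα² + β₁a + β₂m + β₃am + β₄ᵀw}) dN(μ_{a′}, σα²)(m) over ∫ exp(−Λ e^{β₁a + β₂m + β₃am + β₄ᵀw}) dN(μ_{a′}, σα²)(m), μ_{a′} = α₀ + α₁a′ + α₂ᵀw), the natural direct effect expression converges to its rare-outcome approximation: lim_{Λ→0⁺} [δ(Λ; a, a*) − δ(Λ; a*, a*)] = {β₁ + β₃(α₀ + α₁a* + α₂ᵀw + β₂σα²)}(a − a*) + (1/2)β₃²σα²(a²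 − a*²). -/
/-!
As `Λ → 0⁺` the integrands `exp (-(Λ e^{…}))` tend to `1` pointwise and stay bounded by `1`, so by
dominated convergence both Gaussian integrals in `r_{a,a*}(Λ)` tend to `1`, hence `log r_{a,a*}(Λ) → 0`.
What remains of `δ(Λ; a, a*) − δ(Λ; a*, a*)` does not depend on `Λ` and equals the claimed limit.
-/

open MeasureTheory ProbabilityTheory Real Filter Topology

theorem tendsto_integral_exp_neg_mul_nhdsGT_zero {α : Type*} [MeasurableSpace α] (ν : Measure α)
    [IsFiniteMeasure ν] {h : α → ℝ} (hh : Measurable h) (h_nonneg : ∀ x, 0 ≤ h x) :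
    Tendsto (fun Λ => ∫ x, exp (-(Λ * h x)) ∂ν) (𝓝[>] 0) (𝓝 (ν.real Set.univ)) := by
  have h_le_one : ∀ᶠ Λ in 𝓝[>] (0 : ℝ), ∀ᵐ x ∂ν, ‖exp (-(Λ * h x))‖ ≤ 1 := by
    filter_upwards [self_mem_nhdsWithin] with Λ hΛ
    refine ae_of_all _ fun x => ?_
    rw [Real.norm_of_nonneg (exp_pos _).le, exp_le_one_iff, neg_nonpos]
    exact mul_nonneg hΛ.le (h_nonneg x)
  have h_pointwise : ∀ᵐ x ∂ν, Tendsto (fun Λ => exp (-(Λ * h x))) (𝓝[>] 0) (𝓝 1) := by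
    refine ae_of_all _ fun x => ?_
    have : Continuous fun Λ : ℝ => exp (-(Λ * h x)) := by fun_prop
    simpa using (this.tendsto 0).mono_left nhdsWithin_le_nhds
  simpa using tendsto_integral_filter_of_dominated_convergence (fun _ => (1 : ℝ))
    (Eventually.of_forall fun Λ => (by fun_prop : Measurable fun x => exp (-(Λ * h x)))
      |>.aestronglyMeasurable) h_le_one (integrable_const 1) h_pointwise

theorem stmt_17_general (d : ℕ) (α₀ α₁ : ℝ) (α₂ : Fin d → ℝ) (σα : ℝ)
    (β₁ β₂ β₃ : ℝ) (β₄ : Fin d → ℝ) (w : Fin d → ℝ) (a astar : ℝ)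
    (μm : ℝ → ℝ)
    (r : ℝ → ℝ → ℝ → ℝ)
    (hr : r = fun a a' Λ =>
      (∫ m, exp (-(Λ * exp ((β₂ + β₃ * a) ^ 2 * σα ^ 2 + β₁ * a + β₂ * m + β₃ * a * m
            + ∑ i, β₄ i * w i))) ∂(gaussianReal (μm a') ⟨σα ^ 2, sq_nonneg σα⟩))
        / (∫ m, exp (-(Λ * exp (β₁ * a + β₂ * m + β₃ * a * m + ∑ i, β₄ i * w i)))
            ∂(gaussianReal (μm a') ⟨σα ^ 2, sq_nonneg σα⟩)))
    (δ : ℝ → ℝ → ℝ → ℝ)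
    (hδ : δ = fun Λ a a' => Real.log (r a a' Λ) + (β₁ * a + ∑ i, β₄ i * w i)
      + (β₂ + β₃ * a) * (α₀ + α₁ * a' + ∑ i, α₂ i * w i)
      + (1 / 2) * (β₂ + β₃ * a) ^ 2 * σα ^ 2) :
    Tendsto (fun Λ => δ Λ a astar - δ Λ astar astar) (nhdsWithin 0 (Set.Ioi 0))
      (nhds ((β₁ + β₃ * (α₀ + α₁ * astar + (∑ i, α₂ i * w i) + β₂ * σα ^ 2))
          * (a - astar)
        + (1 / 2) * β₃ ^ 2 * σα ^ 2 * (a ^ 2 - astar ^ 2))) := by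
  have hr_lim (b : ℝ) : Tendsto (fun Λ => r b astar Λ) (𝓝[>] 0) (𝓝 1) := by
    set ν := gaussianReal (μm astar) ⟨σα ^ 2, sq_nonneg σα⟩
    have : IsProbabilityMeasure ν := instIsProbabilityMeasureGaussianReal _ _
    have hnum := tendsto_integral_exp_neg_mul_nhdsGT_zero ν
      (h := fun m => exp ((β₂ + β₃ * b) ^ 2 * σα ^ 2 + β₁ * b + β₂ * m + β₃ * b * m
        + ∑ i, β₄ i * w i)) (by fun_prop) fun _ => (exp_pos _).le
    have hden := tendsto_integral_exp_neg_mul_nhdsGT_zero ν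
      (h := fun m => exp (β₁ * b + β₂ * m + β₃ * b * m + ∑ i, β₄ i * w i))
      (by fun_prop) fun _ => (exp_pos _).le
    rw [probReal_univ] at hnum hden
    rw [hr]
    simpa only [div_one, Pi.div_def] using hnum.div hden one_ne_zero
  have hlog_lim (b : ℝ) : Tendsto (fun Λ => log (r b astar Λ)) (𝓝[>] 0) (𝓝 0) := by
    simpa using (hr_lim b).log one_ne_zero
  subst hδ
  set μ := α₀ + α₁ * astar + ∑ i, α₂ i * w i
  convert ((hlog_lim a).sub (hlog_lim astar)).add_const
    ((β₂ + β₃ * a) * μ + (1 / 2) * (β₂ + β₃ * a) ^ 2 * σα ^ 2 + β₁ * a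
      - ((β₂ + β₃ * astar) * μ + (1 / 2) * (β₂ + β₃ * astar) ^ 2 * σα ^ 2 + β₁ * astar))
    using 2 <;> ring

/-- Under the linear normal mediator model and the Cox outcome model
with exposure-mediator interaction, the exact natural direct effect expression
`δ(Λ; a, a*) − δ(Λ; a*, a*)` converges, as the cumulative baseline hazard `Λ → 0⁺`
(rare outcome), to its rare-outcome approximation
`{β₁ + β₃(α₀ + α₁ a* + α₂ᵀw + β₂σα²)}(a − a*) + (1/2)β₃²σα²(a² − a*²)`. -/
theorem stmt_17 (d : ℕ) (α₀ α₁ : ℝ) (α₂ : Fin d → ℝ) (σα : ℝ) (hσα : 0 < σα)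
    (β₁ β₂ β₃ : ℝ) (β₄ : Fin d → ℝ) (w : Fin d → ℝ) (a astar : ℝ)
    (μm : ℝ → ℝ) (hμm : μm = fun a' => α₀ + α₁ * a' + ∑ i, α₂ i * w i)
    (r : ℝ → ℝ → ℝ → ℝ)
    (hr : r = fun a a' Λ =>
      (∫ m, exp (-(Λ * exp ((β₂ + β₃ * a) ^ 2 * σα ^ 2 + β₁ * a + β₂ * m + β₃ * a * m
            + ∑ i, β₄ i * w i))) ∂(gaussianReal (μm a') ⟨σα ^ 2, sq_nonneg σα⟩))
        / (∫ m, exp (-(Λ * exp (β₁ * a + β₂ * m + β₃ * a * m + ∑ i, β₄ i * w i)))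
            ∂(gaussianReal (μm a') ⟨σα ^ 2, sq_nonneg σα⟩)))
    (δ : ℝ → ℝ → ℝ → ℝ)
    (hδ : δ = fun Λ a a' => Real.log (r a a' Λ) + (β₁ * a + ∑ i, β₄ i * w i)
      + (β₂ + β₃ * a) * (α₀ + α₁ * a' + ∑ i, α₂ i * w i)
      + (1 / 2) * (β₂ + β₃ * a) ^ 2 * σα ^ 2) :
    Tendsto (fun Λ => δ Λ a astar - δ Λ astar astar) (nhdsWithin 0 (Set.Ioi 0))
      (nhds ((β₁ + β₃ * (α₀ + α₁ * astar + (∑ i, α₂ i * w i) + β₂ * σα ^ 2))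
          * (a - astar)
        + (1 / 2) * β₃ ^ 2 * σα ^ 2 * (a ^ 2 - astar ^ 2))) :=
  stmt_17_general d α₀ α₁ α₂ σα β₁ β₂ β₃ β₄ w a astar μm r hr δ hδ
end
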